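/- arXiv:2505.02781 — 2 statements merged into one kernel-verified Lean document; each statement's English description precedes it below -/
import Mathlib

section
/- Let G = (V,E) be a DAG and let A, B ∈ V be distinct vertices with B ∉ De(A,G) and B ∉ Pa(A,G). Then A and B are d-separated given Pa(A,G) in G. -/
universe u

/-- A directed acyclic graph on vertex type `V`: an edge relation whose
transitive closure is irreflexive (no directed cycles, no self-loops). -/
structure DAG (V : Type u) where
  E : V → V → Prop
  acyclic : ∀ v, ¬ Relation.TransGen E v v

namespace DAG

variable {V : Type u}

/-- Parents of `w`: vertices `u` with `u → w`. -/
def Pa (G : DAG V) (w : V) : Set V := {u | G.E u w}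

/-- Neighbors of `w`: vertices `u` with `u → w` or `w → u`. -/
def Ne (G : DAG V) (w : V) : Set V := {u | G.E u w ∨ G.E w u}

/-- Descendants of `w`: vertices reachable from `w` by a directed path of length ≥ 1. -/
def De (G : DAG V) (w : V) : Set V := {u | Relation.TransGen G.E w u}

/-- `p` is a path between `A` and `B`: a list of pairwise distinct vertices,
starting at `A`, ending at `B`, consecutive vertices joined by an edge
in one direction or the other. -/
def IsPathBetween (G : DAG V) (A B : V) (p : List V) : Prop :=
  p.Nodup ∧ p.Chain' (fun a b => G.E a b ∨ G.E b a) ∧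
  p.head? = some A ∧ p.getLast? = some B

/-- `w` is a collider on the path `p`: it is an interior vertex of `p`
and both edges of `p` incident to `w` point into `w`. -/
def IsColliderOn (G : DAG V) (p : List V) (w : V) : Prop :=
  ∃ a b, List.IsInfix [a, w, b] p ∧ G.E a w ∧ G.E b w

/-- The path `p` is blocked by `Z`: it contains an interior non-collider in `Z`,
or it contains a collider `w` with `({w} ∪ De(w)) ∩ Z = ∅`. -/
def Blocked (G : DAG V) (Z : Set V) (p : List V) : Prop :=
  (∃ a w b, List.IsInfix [a, w, b] p ∧ ¬ (G.E a w ∧ G.E b w) ∧ w ∈ Z) ∨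
  (∃ w, G.IsColliderOn p w ∧ (insert w (G.De w)) ∩ Z = ∅)

/-- `A` and `B` are d-separated given `Z` in `G`: every path between `A` and `B`
is blocked by `Z`. -/
def dsep (G : DAG V) (A B : V) (Z : Set V) : Prop :=
  ∀ p, G.IsPathBetween A B p → G.Blocked Z p

/-- The `h`-hop neighborhood of `Y`: vertices at skeleton distance at most `h`
from `Y` (equivalently, joined to `Y` by a path with at most `h` edges). -/
def NeHood (G : DAG V) (Y : V) (h : ℕ) : Set V :=
  {d | ∃ p, G.IsPathBetween Y d p ∧ p.length ≤ h + 1}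

/-- `C_s(D,G)`: vertices still adjacent to `D` at iteration `s` of a PC-style
local procedure. -/
def Csets (G : DAG V) (D : V) : ℕ → Set V
  | 0 => {v | v ≠ D}
  | s + 1 => {A | A ∈ G.Csets D s ∧
      ¬ ∃ Z : Finset V, (Z : Set V) ⊆ G.Csets D s \ {A} ∧ Z.card = s + 1 ∧
        G.dsep D A (Z : Set V)}

/-- Spurious neighbors of `D`: `C_{|V|-2}(D,G) \ Ne(D,G)`. -/
def SNe [Fintype V] (G : DAG V) (D : V) : Set V :=
  G.Csets D (Fintype.card V - 2) \ G.Ne D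

/-- `p` is a descendant inducing path (DIP) between `A` and `B`. Here `L` is
the (ordered) list of vertices of `{A,B} ∪ (Ne(A,G) ∩ V(p))` in their order of
appearance along `p`; the colliders of `p` are exactly the interior elements of
`L`, and each element of `L` is a descendant of its predecessor. -/
def IsDIP (G : DAG V) (A B : V) (p : List V) : Prop :=
  G.IsPathBetween A B p ∧
  ∃ L : List V, L.Sublist p ∧
    (∀ v, v ∈ L ↔ v ∈ p ∧ (v = A ∨ v = B ∨ v ∈ G.Ne A)) ∧
    (∀ w, G.IsColliderOn p w ↔ (w ∈ L ∧ w ≠ A ∧ w ≠ B)) ∧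
    L.Chain' (fun x y => y ∈ G.De x)

/-- Descendant inducing neighbors of `A`: vertices `B ∉ Ne(A,G) ∪ {A}` such that
a DIP between `A` and `B` exists in `G`. -/
def DINe (G : DAG V) (A : V) : Set V :=
  {B | B ∉ G.Ne A ∧ B ≠ A ∧ ∃ p, G.IsDIP A B p}

/-- The local Markov equivalence class of `G` relative to `Y` and hop `h`. -/
def LMEC [Fintype V] (G : DAG V) (Y : V) (h : ℕ) : Set (DAG V) :=
  {Gi | ∀ D ∈ G.NeHood Y h, ∀ s : ℕ, 1 ≤ s → s ≤ Fintype.card V - 2 →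
    ∀ W ∈ G.Csets D (s - 1), ∀ S : Finset V,
      (S : Set V) ⊆ G.Csets D (s - 1) \ {W} → S.card = s →
      (G.dsep D W (S : Set V) ↔ Gi.dsep D W (S : Set V))}

/-- The triple `(D₁,D₂,D₃)` forms an unshielded collider: `D₁ → D₂ ← D₃`
with `D₁` and `D₃` non-adjacent. -/
def IsUC (G : DAG V) (D₁ D₂ D₃ : V) : Prop :=
  D₁ ≠ D₂ ∧ D₂ ≠ D₃ ∧ D₁ ≠ D₃ ∧ G.E D₁ D₂ ∧ G.E D₃ D₂ ∧ D₁ ∉ G.Ne D₃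

/-- `(D,A,W)` is a non-collider triple: `A ∈ Ne(D)`, `W ∈ Ne(A)`, and not both
`D → A` and `W → A` are edges. -/
def NonColliderTriple (G : DAG V) (D A W : V) : Prop :=
  D ≠ A ∧ A ≠ W ∧ D ≠ W ∧ A ∈ G.Ne D ∧ W ∈ G.Ne A ∧ ¬ (G.E D A ∧ G.E W A)

/-- Undirected edge of the LEG between two nodes of the `h`-hop neighborhood. -/
def LEGundirLocal [Fintype V] (G : DAG V) (Y : V) (h : ℕ) (D₁ D₂ : V) : Prop :=
  D₁ ∈ G.NeHood Y h ∧ D₂ ∈ G.NeHood Y h ∧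
  (∀ Gi ∈ G.LMEC Y h, Gi.E D₁ D₂ ∨ Gi.E D₂ D₁) ∧
  (∃ Gi ∈ G.LMEC Y h, Gi.E D₁ D₂) ∧ (∃ Gj ∈ G.LMEC Y h, Gj.E D₂ D₁)

/-- Undirected edge of the LEG between a node of the neighborhood and a node outside. -/
def LEGundirOutside [Fintype V] (G : DAG V) (Y : V) (h : ℕ) (D A : V) : Prop :=
  D ∈ G.NeHood Y h ∧ A ∉ G.NeHood Y h ∧
  ∀ Gi ∈ G.LMEC Y h, A ∈ Gi.Ne D ∪ Gi.SNe D

/-- Directed edge of the LEG. -/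
def LEGdir [Fintype V] (G : DAG V) (Y : V) (h : ℕ) (D₁ D₂ : V) : Prop :=
  D₁ ∈ G.NeHood Y h ∧ D₂ ∈ G.NeHood Y h ∧
  ∀ Gi ∈ G.LMEC Y h, Gi.E D₁ D₂

/-- Double-bar edge of the LEG. -/
def LEGdoubleBar [Fintype V] (G : DAG V) (Y : V) (h : ℕ) (D A : V) : Prop :=
  D ∈ G.NeHood Y h ∧ A ∉ G.NeHood Y h ∧
  (∀ Gi ∈ G.LMEC Y h, A ∈ Gi.Ne D ∪ Gi.SNe D) ∧
  (∀ Gi ∈ G.LMEC Y h, ∀ W : V, W ∉ Gi.NeHood Y h ∪ Gi.Ne D ∪ Gi.SNe D →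
    ¬ Gi.NonColliderTriple D A W)

/-- Undirected edge of the LEG (either of the two undirected edge types). -/
def LEGundir [Fintype V] (G : DAG V) (Y : V) (h : ℕ) (D A : V) : Prop :=
  G.LEGundirLocal Y h D A ∨ G.LEGundirLocal Y h A D ∨ G.LEGundirOutside Y h D A

/-- `Dset` satisfies the non-orientability criterion (NOC) in the LEG `L^{Y,h}`. -/
def NOC [Fintype V] (G : DAG V) (Y : V) (h : ℕ) (Dset : Set V) : Prop :=
  Dset ⊆ G.NeHood Y h ∧
  ∀ D ∈ Dset,
    (¬ ∃ A, A ∉ Dset ∧ G.LEGundir Y h D A) ∧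
    (∀ A₁ A₂, A₁ ∉ Dset → A₂ ∉ Dset →
      G.LEGdoubleBar Y h D A₁ → G.LEGdoubleBar Y h D A₂ → A₁ = A₂)

end DAG

/-!
Let `p` be a path from `A` to `B`. If its first edge points into `A`, the second vertex is a
parent of `A`; it is not `B`, so it is an interior non-collider in `Pa(A)` and blocks `p`.
If the first edge leaves `A`, follow `p` while its edges keep pointing forward: since `B` is not a
descendant of `A`, some edge points backward, and the vertex before it is a collider lying in
`De(A)`. Together with its descendants it avoids `Pa(A)`, since a parent of `A` that is also a
descendant of `A` would close a directed cycle.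
-/

namespace DAG

variable {V : Type u} (G : DAG V)

lemma E_asymm {a b : V} (hab : G.E a b) : ¬ G.E b a :=
  fun hba => G.acyclic a (.tail (.single hab) hba)

lemma disjoint_De_Pa (a : V) : Disjoint (G.De a) (G.Pa a) :=
  Set.disjoint_left.mpr fun _ hDe hPa => G.acyclic a (.tail hDe hPa)

variable {G}

lemma insert_De_subset_De {a w : V} (hw : w ∈ G.De a) : insert w (G.De w) ⊆ G.De a := by
  rintro u (rfl | hu)
  exacts [hw, .trans hw hu]

lemma IsColliderOn.mono {p q : List V} {w : V} (hw : G.IsColliderOn p w) (hpq : p <:+: q) :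
    G.IsColliderOn q w := by
  obtain ⟨a, b, hinf, haw, hbw⟩ := hw
  exact ⟨a, b, hinf.trans hpq, haw, hbw⟩

lemma mem_De_or_exists_collider_mem_De {x y b : V} {l : List V} (hxy : G.E x y)
    (hch : (x :: y :: l).IsChain (fun u v => G.E u v ∨ G.E v u))
    (hb : (x :: y :: l).getLast? = some b) :
    b ∈ G.De x ∨ ∃ w, G.IsColliderOn (x :: y :: l) w ∧ w ∈ G.De x := by
  induction l generalizing x y with
  | nil =>
    simp only [List.getLast?_cons_cons, List.getLast?_singleton, Option.some.injEq] at hb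
    exact .inl (hb ▸ .single hxy)
  | cons z l ih =>
    rcases (List.isChain_cons_cons.mp hch.tail).1 with hyz | hzy
    · rw [List.getLast?_cons_cons] at hb
      rcases ih hyz hch.tail hb with hbDe | ⟨w, hw, hwDe⟩
      · exact .inl (.head hxy hbDe)
      · exact .inr ⟨w, hw.mono (List.suffix_cons x _).isInfix, .head hxy hwDe⟩
    · exact .inr ⟨y, ⟨x, z, ⟨[], l, rfl⟩, hxy, hzy⟩, .single hxy⟩

lemma blocked_Pa_of_collider_mem_De {a w : V} {p : List V} (hw : G.IsColliderOn p w)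
    (hwDe : w ∈ G.De a) : G.Blocked (G.Pa a) p :=
  .inr ⟨w, hw, Set.disjoint_iff_inter_eq_empty.mp
    ((G.disjoint_De_Pa a).mono_left (insert_De_subset_De hwDe))⟩

lemma blocked_Pa_of_parent_second {a v c : V} {l : List V} (hva : G.E v a) :
    G.Blocked (G.Pa a) (a :: v :: c :: l) :=
  .inl ⟨a, v, c, ⟨[], l, rfl⟩, fun h => G.E_asymm hva h.1, hva⟩

end DAG

theorem stmt_9_general {V : Type u} (G : DAG V) (A B : V) (hAB : A ≠ B)
    (hDe : B ∉ G.De A) (hPa : B ∉ G.Pa A) :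
    G.dsep A B (G.Pa A) := by
  rintro (_ | ⟨a, _ | ⟨v, rest⟩⟩) ⟨-, hch, hhead, hlast⟩
  · cases hhead
  · cases hhead
    cases hlast
    exact absurd rfl hAB
  cases hhead
  rcases (List.isChain_cons_cons.mp hch).1 with hAv | hvA
  · rcases DAG.mem_De_or_exists_collider_mem_De hAv hch hlast with hBDe | ⟨w, hw, hwDe⟩
    · exact absurd hBDe hDe
    · exact DAG.blocked_Pa_of_collider_mem_De hw hwDe
  · cases rest with
    | nil =>
      cases hlast
      exact absurd hvA hPa
    | cons c l => exact DAG.blocked_Pa_of_parent_second hvA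

/-- a vertex is d-separated from any non-descendant non-parent
given its parents. -/
theorem stmt_9 {V : Type u} [Fintype V] (G : DAG V) (A B : V) (hAB : A ≠ B)
    (hDe : B ∉ G.De A) (hPa : B ∉ G.Pa A) :
    G.dsep A B (G.Pa A) :=
  stmt_9_general G A B hAB hDe hPa
end

section
/- Let G = (V,E) be a DAG, Y ∈ V, h a natural number, and let L^{Y,h} be the LEG of LMEC(Y,h,G). Then for every D ∈ NeHood(Y,h,G) and every A ∉ NeHood(Y,h,G): D and A are adjacent in L^{Y,h} (joined by an undirected or double-bar edge) if and only if A ∈ Ne(D,G) ∪ SNe(D,G). -/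
universe u

namespace DAG

variable {V : Type u}

lemma not_mem_ne_self (G : DAG V) (D : V) : D ∉ G.Ne D := by
  intro hmem
  rcases hmem with h | h <;> exact G.acyclic D (Relation.TransGen.single h)

lemma not_blocked_pair (G : DAG V) (Z : Set V) (D A : V) :
    ¬ G.Blocked Z [D, A] := by
  rintro (⟨a, w, b, hinf, -, -⟩ | ⟨w, ⟨a, b, hinf, -, -⟩, -⟩) <;>
    simpa using hinf.length_le

lemma ne_subset_csets (G : DAG V) (D : V) : ∀ s, G.Ne D ⊆ G.Csets D s := by
  intro s
  induction s with
  | zero =>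
    intro A hA
    simp only [Csets, Set.mem_setOf_eq]
    rintro rfl
    exact G.not_mem_ne_self _ hA
  | succ s ih =>
    intro A hA
    refine ⟨ih hA, ?_⟩
    rintro ⟨Z, hZ, hcard, hdsep⟩
    have hAD : A ≠ D := by
      rintro rfl; exact G.not_mem_ne_self _ hA
    have hpath : G.IsPathBetween D A [D, A] := by
      refine ⟨by simp [Ne.symm hAD], ?_, rfl, rfl⟩
      simp only [List.Chain', List.isChain_cons_cons, List.isChain_singleton, and_true]
      exact hA.symm
    exact G.not_blocked_pair Z D A (hdsep _ hpath)

lemma csets_eq [Fintype V] (G Gi : DAG V) (Y : V) (h : ℕ)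
    (hGi : Gi ∈ G.LMEC Y h) (D : V) (hD : D ∈ G.NeHood Y h) :
    ∀ s, s ≤ Fintype.card V - 2 → Gi.Csets D s = G.Csets D s := by
  intro s
  induction s with
  | zero => intro _; rfl
  | succ s ih =>
    intro hs
    have ihe := ih (Nat.le_of_succ_le hs)
    have hiff : ∀ A ∈ G.Csets D s, ∀ Z : Finset V,
        (Z : Set V) ⊆ G.Csets D s \ {A} → Z.card = s + 1 →
        (G.dsep D A (Z : Set V) ↔ Gi.dsep D A (Z : Set V)) := by
      intro A hA Z hZ hc
      exact hGi D hD (s + 1) (Nat.succ_le_succ (Nat.zero_le s)) hs A hA Z hZ hc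
    ext A
    simp only [Csets, Set.mem_setOf_eq, ihe]
    constructor
    · rintro ⟨hA, hno⟩
      refine ⟨hA, ?_⟩
      rintro ⟨Z, hZ, hcard, hdsep⟩
      exact hno ⟨Z, hZ, hcard, (hiff A hA Z hZ hcard).mp hdsep⟩
    · rintro ⟨hA, hno⟩
      refine ⟨hA, ?_⟩
      rintro ⟨Z, hZ, hcard, hdsep⟩
      exact hno ⟨Z, hZ, hcard, (hiff A hA Z hZ hcard).mpr hdsep⟩

lemma ne_union_sne_eq [Fintype V] (G : DAG V) (D : V) :
    G.Ne D ∪ G.SNe D = G.Csets D (Fintype.card V - 2) := by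
  rw [SNe, Set.union_diff_self,
    Set.union_eq_self_of_subset_left (G.ne_subset_csets D _)]

end DAG

/-- a node `D` of the neighborhood and a node `A` outside are
adjacent in the LEG iff `A ∈ Ne(D,G) ∪ SNe(D,G)`. -/
theorem stmt_12 {V : Type u} [Fintype V] (G : DAG V) (Y : V) (h : ℕ)
    (D A : V) (hD : D ∈ G.NeHood Y h) (hA : A ∉ G.NeHood Y h) :
    (G.LEGundirOutside Y h D A ∨ G.LEGdoubleBar Y h D A) ↔
      A ∈ G.Ne D ∪ G.SNe D := by
  have hGmem : G ∈ G.LMEC Y h := fun _ _ _ _ _ _ _ _ _ _ => Iff.rfl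
  have key : ∀ Gi ∈ G.LMEC Y h,
      (A ∈ Gi.Ne D ∪ Gi.SNe D ↔ A ∈ G.Ne D ∪ G.SNe D) := by
    intro Gi hGi
    rw [Gi.ne_union_sne_eq D, G.ne_union_sne_eq D,
      DAG.csets_eq G Gi Y h hGi D hD (Fintype.card V - 2) le_rfl]
  constructor
  · rintro (hE | hE)
    · exact (key G hGmem).mp (hE.2.2 G hGmem)
    · exact (key G hGmem).mp (hE.2.2.1 G hGmem)
  · intro hmem
    exact Or.inl ⟨hD, hA, fun Gi hGi => (key Gi hGi).mpr hmem⟩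
end
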